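/- arXiv:1202.0420 — 3 statements merged into one kernel-verified Lean document; each statement's English description precedes it below -/
import Mathlib

section
/- Let (P^t) be the semigroup of a continuous-time Markov process on a Polish metric space (E,d). If x, y, z are pairwise distinct points with d(x,z) = d(x,y) + d(y,z), then the coarse Ricci curvature satisfies κ(x,z) ≥ min(κ(x,y), κ(y,z)). -/
open MeasureTheory ProbabilityTheory Filter Topology Set
open scoped ENNReal NNReal

/-- The L¹ Wasserstein distance between two measures on a metric space:
infimum over all couplings (measures on `E × E` with the prescribed marginals)
of the integral of the distance. -/
noncomputable def W1 {E : Type*} [MetricSpace E] [MeasurableSpace E] (μ ν : Measure E) : ℝ≥0∞ :=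
  ⨅ (ξ : Measure (E × E)) (_ : ξ.map Prod.fst = μ ∧ ξ.map Prod.snd = ν),
    ∫⁻ p, edist p.1 p.2 ∂ξ

/-- The quantity `(1 - W₁(P_x^t, P_y^t)/d(x,y)) / t`, as an extended real number. -/
noncomputable def curvRatio {E : Type*} [MetricSpace E] [MeasurableSpace E]
    (P : ℝ → Kernel E E) (x y : E) (t : ℝ) : EReal :=
  (1 - (W1 (P t x) (P t y) : EReal) / ((ENNReal.ofReal (dist x y)) : EReal)) / (t : EReal)

/-- The coarse Ricci curvature `κ(x,y)`: the liminf as `t → 0⁺` of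
`(1 - W₁(P_x^t, P_y^t)/d(x,y)) / t`. -/
noncomputable def kappa {E : Type*} [MetricSpace E] [MeasurableSpace E]
    (P : ℝ → Kernel E E) (x y : E) : EReal :=
  Filter.liminf (curvRatio P x y) (𝓝[>] 0)

/-- The upper coarse Ricci curvature `κ̄(x,y)`: the limsup as `t → 0⁺` of
`(1 - W₁(P_x^t, P_y^t)/d(x,y)) / t`. -/
noncomputable def kappaBar {E : Type*} [MetricSpace E] [MeasurableSpace E]
    (P : ℝ → Kernel E E) (x y : E) : EReal :=
  Filter.limsup (curvRatio P x y) (𝓝[>] 0)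

/-- `P` is a Markov semigroup of transition kernels: each `P t` is a Markov kernel,
`P 0` is the identity, and the Chapman-Kolmogorov semigroup property holds. -/
def IsMarkovSemigroup {E : Type*} [MeasurableSpace E] (P : ℝ → Kernel E E) : Prop :=
  (∀ t, IsMarkovKernel (P t)) ∧ (P 0 = Kernel.id) ∧
    ∀ s t : ℝ, 0 ≤ s → 0 ≤ t → P (s + t) = (P t).comp (P s)

/-!
By the triangle inequality for `W₁` (proved by gluing two couplings along their common marginal
`P_y^t`) and `d(x,z) = d(x,y) + d(y,z)`, the ratio `W₁(P_x^t, P_z^t) / d(x,z)` is bounded by the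
mediant `(W₁(P_x^t, P_y^t) + W₁(P_y^t, P_z^t)) / (d(x,y) + d(y,z))`, hence by the larger of the
ratios along `x y` and `y z`. So for every `t ≥ 0` the curvature ratio along `x z` dominates the
smaller of the two others, and the inequality passes to the `liminf` as `t → 0⁺`.
-/

namespace ENNReal

lemma add_div_add_le_max {a b c d : ℝ≥0∞} (hc0 : c ≠ 0) (hc : c ≠ ∞) (hd0 : d ≠ 0) (hd : d ≠ ∞) :
    (a + b) / (c + d) ≤ max (a / c) (b / d) := by
  refine div_le_of_le_mul ?_
  calc a + b = a / c * c + b / d * d := by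
        rw [ENNReal.div_mul_cancel hc0 hc, ENNReal.div_mul_cancel hd0 hd]
    _ ≤ max (a / c) (b / d) * c + max (a / c) (b / d) * d := by gcongr <;> simp
    _ = max (a / c) (b / d) * (c + d) := (mul_add _ _ _).symm

end ENNReal

namespace EReal

lemma coe_ennreal_div (a : ℝ≥0∞) {c : ℝ≥0∞} (hc0 : c ≠ 0) (hc : c ≠ ∞) :
    ((a / c : ℝ≥0∞) : EReal) = a / c := by
  lift c to ℝ≥0 using hc
  rcases eq_or_ne a ∞ with rfl | ha
  · rw [ENNReal.top_div_of_ne_top ENNReal.coe_ne_top, coe_ennreal_top, top_div_of_pos_ne_top]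
    · exact coe_ennreal_pos.2 (pos_iff_ne_zero.2 hc0)
    · exact coe_nnreal_ne_top c
  lift a to ℝ≥0 using ha
  rw [← ENNReal.coe_div (ENNReal.coe_ne_zero.1 hc0), coe_nnreal_eq_coe_real, coe_nnreal_eq_coe_real,
    coe_nnreal_eq_coe_real, NNReal.coe_div, coe_div]

end EReal

namespace MeasureTheory.Measure

variable {α β γ : Type*} [MeasurableSpace α] [MeasurableSpace β] [MeasurableSpace γ]
  [StandardBorelSpace α] [Nonempty α] [StandardBorelSpace γ] [Nonempty γ]

/-- Coordinates are ordered `(b, a, c)`: `b` is drawn from `ξ₂.fst`, then `a` and `c`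
independently from the conditional laws of `ξ₁` and `ξ₂` given `b`. -/
noncomputable def gluing (ξ₁ : Measure (α × β)) (ξ₂ : Measure (β × γ)) [IsFiniteMeasure ξ₁]
    [IsFiniteMeasure ξ₂] : Measure (β × α × γ) :=
  ξ₂.fst ⊗ₘ ((ξ₁.map Prod.swap).condKernel ×ₖ ξ₂.condKernel)

variable (ξ₁ : Measure (α × β)) (ξ₂ : Measure (β × γ)) [IsFiniteMeasure ξ₁] [IsFiniteMeasure ξ₂]

lemma map_gluing_left (h : ξ₁.snd = ξ₂.fst) :
    (gluing ξ₁ ξ₂).map (fun q ↦ (q.2.1, q.1)) = ξ₁ := by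
  have h_swap : (gluing ξ₁ ξ₂).map (Prod.map id Prod.fst) = ξ₁.map Prod.swap := by
    rw [gluing, ← compProd_map measurable_fst, ← Kernel.fst_eq, Kernel.fst_prod, ← h,
      ← fst_map_swap, disintegrate]
  rw [show (fun q : β × α × γ ↦ (q.2.1, q.1)) = Prod.swap ∘ Prod.map id Prod.fst from rfl,
    ← map_map measurable_swap (by fun_prop), h_swap, map_map measurable_swap measurable_swap,
    Prod.swap_swap_eq, map_id]

lemma map_gluing_right : (gluing ξ₁ ξ₂).map (fun q ↦ (q.1, q.2.2)) = ξ₂ := by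
  rw [gluing, show (fun q : β × α × γ ↦ (q.1, q.2.2)) = Prod.map id Prod.snd from rfl,
    ← compProd_map measurable_snd, ← Kernel.snd_eq, Kernel.snd_prod, disintegrate]

end MeasureTheory.Measure

section Wasserstein

variable {E : Type*} [MetricSpace E] [MeasurableSpace E]

lemma W1_le_lintegral_edist {μ ν : Measure E} (ξ : Measure (E × E)) (h₁ : ξ.fst = μ)
    (h₂ : ξ.snd = ν) : W1 μ ν ≤ ∫⁻ p, edist p.1 p.2 ∂ξ :=
  iInf₂_le ξ ⟨h₁, h₂⟩

variable [PolishSpace E] [BorelSpace E] [Nonempty E]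

lemma W1_le_add_of_snd_eq_fst (ξ₁ ξ₂ : Measure (E × E)) [IsFiniteMeasure ξ₁] [IsFiniteMeasure ξ₂]
    (h : ξ₁.snd = ξ₂.fst) :
    W1 ξ₁.fst ξ₂.snd ≤ (∫⁻ p, edist p.1 p.2 ∂ξ₁) + ∫⁻ p, edist p.1 p.2 ∂ξ₂ := by
  set η := Measure.gluing ξ₁ ξ₂
  have hη₁ := Measure.map_gluing_left ξ₁ ξ₂ h
  have hη₂ := Measure.map_gluing_right ξ₁ ξ₂
  have hf : Measurable fun p : E × E ↦ edist p.1 p.2 := continuous_edist.measurable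
  have hfst : (η.map fun q ↦ (q.2.1, q.2.2)).fst = ξ₁.fst := by
    rw [← hη₁, Measure.fst_map_prodMk (by fun_prop), Measure.fst_map_prodMk (by fun_prop)]
  have hsnd : (η.map fun q ↦ (q.2.1, q.2.2)).snd = ξ₂.snd := by
    rw [← hη₂, Measure.snd_map_prodMk (by fun_prop), Measure.snd_map_prodMk (by fun_prop)]
  calc W1 ξ₁.fst ξ₂.snd ≤ ∫⁻ p, edist p.1 p.2 ∂(η.map fun q ↦ (q.2.1, q.2.2)) :=
        W1_le_lintegral_edist _ hfst hsnd
    _ = ∫⁻ q, edist q.2.1 q.2.2 ∂η := lintegral_map hf (by fun_prop)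
    _ ≤ ∫⁻ q, (edist q.2.1 q.1 + edist q.1 q.2.2) ∂η :=
        lintegral_mono fun q ↦ edist_triangle _ _ _
    _ = (∫⁻ q, edist q.2.1 q.1 ∂η) + ∫⁻ q, edist q.1 q.2.2 ∂η := lintegral_add_left (by fun_prop) _
    _ = (∫⁻ p, edist p.1 p.2 ∂(η.map fun q ↦ (q.2.1, q.1))) +
          ∫⁻ p, edist p.1 p.2 ∂(η.map fun q ↦ (q.1, q.2.2)) := by
        rw [lintegral_map hf (by fun_prop), lintegral_map hf (by fun_prop)]
    _ = (∫⁻ p, edist p.1 p.2 ∂ξ₁) + ∫⁻ p, edist p.1 p.2 ∂ξ₂ := by rw [hη₁, hη₂]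

lemma W1_triangle (μ ν ρ : Measure E) [IsFiniteMeasure ν] : W1 μ ρ ≤ W1 μ ν + W1 ν ρ := by
  simp_rw [W1, ENNReal.iInf_add, ENNReal.add_iInf]
  refine le_iInf fun ξ₁ ↦ le_iInf fun ⟨h₁μ, h₁ν⟩ ↦ le_iInf fun ξ₂ ↦ le_iInf fun ⟨h₂ν, h₂ρ⟩ ↦ ?_
  subst h₁μ h₁ν h₂ρ
  have : IsFiniteMeasure ξ₁ := Measure.isFiniteMeasure_of_map (f := Prod.snd) (by fun_prop)
  have : IsFiniteMeasure ξ₂ :=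
    have : IsFiniteMeasure (ξ₂.map Prod.fst) := h₂ν ▸ ‹_›
    Measure.isFiniteMeasure_of_map (f := Prod.fst) (by fun_prop)
  exact W1_le_add_of_snd_eq_fst ξ₁ ξ₂ h₂ν.symm

end Wasserstein

section Curvature

variable {E : Type*} [MetricSpace E] [MeasurableSpace E]

lemma curvRatio_eq_of_ne (P : ℝ → Kernel E E) {x y : E} (hxy : x ≠ y) (t : ℝ) :
    curvRatio P x y t =
      (1 - ((W1 (P t x) (P t y) / ENNReal.ofReal (dist x y) : ℝ≥0∞) : EReal)) / (t : EReal) := by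
  rw [curvRatio, EReal.coe_ennreal_div _ (by simpa using hxy) ENNReal.ofReal_ne_top]

lemma antitone_one_sub_div {t : EReal} (ht : 0 ≤ t) :
    Antitone fun s : ℝ≥0∞ ↦ (1 - (s : EReal)) / t := fun _ _ hs ↦
  EReal.div_le_div_right_of_nonneg ht <|
    EReal.sub_le_sub le_rfl (EReal.coe_ennreal_le_coe_ennreal_iff.2 hs)

variable [PolishSpace E] [BorelSpace E]

lemma min_curvRatio_le_of_dist_eq_add (P : ℝ → Kernel E E) {x y z : E} (hxy : x ≠ y) (hyz : y ≠ z)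
    (hd : dist x z = dist x y + dist y z) {t : ℝ} (ht : 0 ≤ t) [IsFiniteKernel (P t)] :
    min (curvRatio P x y t) (curvRatio P y z t) ≤ curvRatio P x z t := by
  have : Nonempty E := ⟨x⟩
  have hxz : x ≠ z := by
    rintro rfl
    linarith [dist_pos.2 hxy, dist_pos.2 hyz, dist_self x]
  have hsplit :
      ENNReal.ofReal (dist x z) = ENNReal.ofReal (dist x y) + ENNReal.ofReal (dist y z) := by
    rw [hd, ENNReal.ofReal_add dist_nonneg dist_nonneg]
  have hratio : W1 (P t x) (P t z) / ENNReal.ofReal (dist x z) ≤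
      max (W1 (P t x) (P t y) / ENNReal.ofReal (dist x y))
        (W1 (P t y) (P t z) / ENNReal.ofReal (dist y z)) := by
    calc W1 (P t x) (P t z) / ENNReal.ofReal (dist x z)
        ≤ (W1 (P t x) (P t y) + W1 (P t y) (P t z)) / ENNReal.ofReal (dist x z) := by
          gcongr; exact W1_triangle _ _ _
      _ ≤ _ := by
          rw [hsplit]
          exact ENNReal.add_div_add_le_max (by simpa using hxy) ENNReal.ofReal_ne_top
            (by simpa using hyz) ENNReal.ofReal_ne_top
  rw [curvRatio_eq_of_ne P hxy, curvRatio_eq_of_ne P hyz, curvRatio_eq_of_ne P hxz,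
    ← (antitone_one_sub_div (EReal.coe_nonneg.2 ht)).map_max]
  exact antitone_one_sub_div (EReal.coe_nonneg.2 ht) hratio

end Curvature

theorem kappa_min_of_between_general
    {E : Type*} [MetricSpace E] [PolishSpace E] [MeasurableSpace E] [BorelSpace E]
    (P : ℝ → Kernel E E) (hP : IsMarkovSemigroup P)
    (x y z : E) (hxy : x ≠ y) (hyz : y ≠ z)
    (hd : dist x z = dist x y + dist y z) :
    min (kappa P x y) (kappa P y z) ≤ kappa P x z := by
  have hpointwise : ∀ᶠ t in 𝓝[>] (0 : ℝ),
      min (curvRatio P x y t) (curvRatio P y z t) ≤ curvRatio P x z t :=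
    eventually_nhdsWithin_of_forall fun t ht ↦
      have := hP.1 t
      min_curvRatio_le_of_dist_eq_add P hxy hyz hd (le_of_lt ht)
  calc min (kappa P x y) (kappa P y z)
      = liminf (fun t ↦ min (curvRatio P x y t) (curvRatio P y z t)) (𝓝[>] 0) := (liminf_min).symm
    _ ≤ kappa P x z := liminf_le_liminf hpointwise

/-- If `x, y, z` are pairwise distinct points with
`d(x,z) = d(x,y) + d(y,z)`, then `κ(x,z) ≥ min (κ(x,y), κ(y,z))`. -/
theorem kappa_min_of_between
    {E : Type*} [MetricSpace E] [PolishSpace E] [MeasurableSpace E] [BorelSpace E]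
    (P : ℝ → Kernel E E) (hP : IsMarkovSemigroup P)
    (x y z : E) (hxy : x ≠ y) (hyz : y ≠ z) (hxz : x ≠ z)
    (hd : dist x z = dist x y + dist y z) :
    min (kappa P x y) (kappa P y z) ≤ kappa P x z :=
  kappa_min_of_between_general P hP x y z hxy hyz hd
end

section
/- Let ω be a stochastic process with left-continuous sample paths taking values in a Polish space E, and let v be a random variable independent of ω. Let φ be a measurable function and set T = φ(ω, v). Assume that for every value of v and every t ≥ 0, the indicator 𝟙_{φ(ω,v) ≤ t} depends only on the restriction ω|_{[0,t]}. Then T is a weak stopping time for the process ω, with the σ-algebra 𝒢 generated by v witnessing the definition. -/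
open MeasureTheory ProbabilityTheory Filter Topology Set
open scoped ENNReal NNReal

/-- The σ-algebra generated by a process `X` up to time `t` (the natural filtration). -/
def natFiltration {Ω E : Type*} [MeasurableSpace E] (X : ℝ → Ω → E) (t : ℝ) :
    MeasurableSpace Ω :=
  ⨆ (s : ℝ) (_ : s ∈ Set.Icc (0:ℝ) t), MeasurableSpace.comap (X s) inferInstance

/-- `T` is a weak stopping time for the process `X`, witnessed by the σ-algebra `G`:
`T` is nonnegative, `G` is independent of `ℱ_∞ = σ((ℱ_t)_{t ≥ 0})`, and `T` is a stopping
time for the enlarged filtration `𝒢_t = σ(G, ℱ_t)`. -/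
def IsWeakStoppingTime {Ω E : Type*} [MeasurableSpace Ω] [MeasurableSpace E]
    (μ : Measure Ω) (X : ℝ → Ω → E) (T : Ω → ℝ) (G : MeasurableSpace Ω) : Prop :=
  (∀ ω, 0 ≤ T ω) ∧
  Indep G (⨆ (t : ℝ) (_ : 0 ≤ t), MeasurableSpace.comap (X t) inferInstance) μ ∧
  (∀ t : ℝ, 0 ≤ t → MeasurableSet[G ⊔ natFiltration X t] {ω | T ω ≤ t})

/-!
On `{T ≤ t}` only the path up to time `t` matters, so `X` may be replaced by the path frozen
at `t`, `s ↦ X (projIcc 0 t s)`. That path is `ℱ_t`-measurable as a map into path space, and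
`v` is `σ(v)`-measurable, so `{T ≤ t}`, the preimage of `Iic t` under the measurable map `φ`
applied to the pair, lies in `σ(v) ⊔ ℱ_t`.
-/

section DependsOnPast

variable {Ω E : Type*} [MeasurableSpace E] {X : ℝ → Ω → E} {s t : ℝ}

lemma comap_le_natFiltration (hs : s ∈ Icc 0 t) :
    MeasurableSpace.comap (X s) inferInstance ≤ natFiltration X t :=
  le_iSup₂ (f := fun u (_ : u ∈ Icc (0:ℝ) t) => MeasurableSpace.comap (X u) inferInstance) s hs

lemma measurable_natFiltration_frozenPath (ht : 0 ≤ t) :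
    Measurable[natFiltration X t] fun ω (s : ℝ) => X (projIcc 0 t ht s) ω :=
  @measurable_pi_lambda _ _ _ (natFiltration X t) _ _ fun s =>
    Measurable.of_comap_le (comap_le_natFiltration (projIcc 0 t ht s).2)

lemma measurableSet_le_of_depends_on_past [MeasurableSpace Ω] {V : Type*} [MeasurableSpace V]
    {v : Ω → V} {φ : (ℝ → E) → V → ℝ} (hφ : Measurable (Function.uncurry φ)) (ht : 0 ≤ t)
    (hpast : ∀ (val : V) (p q : ℝ → E),
      (∀ s ∈ Icc (0:ℝ) t, p s = q s) → (φ p val ≤ t ↔ φ q val ≤ t)) :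
    MeasurableSet[MeasurableSpace.comap v inferInstance ⊔ natFiltration X t]
      {ω | φ (fun s => X s ω) (v ω) ≤ t} := by
  have frozen_eq : {ω | φ (fun s => X s ω) (v ω) ≤ t}
      = (fun ω => φ (fun s => X (projIcc 0 t ht s) ω) (v ω)) ⁻¹' Iic t := by
    ext ω
    exact hpast (v ω) _ _ fun s hs => by rw [projIcc_of_mem ht hs]
  rw [frozen_eq]
  exact (hφ.comp (((measurable_natFiltration_frozenPath ht).mono le_sup_right le_rfl).prodMk
    ((comap_measurable v).mono le_sup_left le_rfl))) measurableSet_Iic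

end DependsOnPast

theorem isWeakStoppingTime_of_depends_on_past_general
    {E : Type*} [MeasurableSpace E]
    {Ω : Type*} [MeasurableSpace Ω] (μ : Measure Ω)
    (X : ℝ → Ω → E)
    {V : Type*} [MeasurableSpace V] (v : Ω → V)
    (hindep : Indep (MeasurableSpace.comap v inferInstance)
      (⨆ (t : ℝ) (_ : (0:ℝ) ≤ t), MeasurableSpace.comap (X t) inferInstance) μ)
    (φ : (ℝ → E) → V → ℝ) (hφmeas : Measurable (Function.uncurry φ))
    (hφpos : ∀ p val, 0 ≤ φ p val)
    (hpast : ∀ (val : V) (t : ℝ), 0 ≤ t → ∀ p q : ℝ → E,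
      (∀ s ∈ Set.Icc (0:ℝ) t, p s = q s) → (φ p val ≤ t ↔ φ q val ≤ t)) :
    IsWeakStoppingTime μ X (fun ω => φ (fun s => X s ω) (v ω))
      (MeasurableSpace.comap v inferInstance) :=
  ⟨fun _ => hφpos _ _, hindep, fun _ ht =>
    measurableSet_le_of_depends_on_past hφmeas ht fun val => hpast val _ ht⟩

/-- Let `X` be a process with left-continuous sample paths with values in a
Polish space, and let `v` be a random variable independent of `X`. If `T = φ(X, v)` is
nonnegative and, for every value of `v` and every `t ≥ 0`, the indicator `𝟙_{φ(ω,v) ≤ t}`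
depends only on `ω|_{[0,t]}`, then `T` is a weak stopping time for `X`, witnessed by the
σ-algebra generated by `v`. -/
theorem isWeakStoppingTime_of_depends_on_past
    {E : Type*} [MetricSpace E] [PolishSpace E] [MeasurableSpace E] [BorelSpace E]
    {Ω : Type*} [MeasurableSpace Ω] (μ : Measure Ω) [IsProbabilityMeasure μ]
    (X : ℝ → Ω → E) (hXmeas : ∀ t, Measurable (X t))
    (hXlc : ∀ ω, ∀ t : ℝ, 0 < t → Tendsto (fun s => X s ω) (𝓝[<] t) (𝓝 (X t ω)))
    {V : Type*} [MeasurableSpace V] (v : Ω → V) (hv : Measurable v)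
    (hindep : Indep (MeasurableSpace.comap v inferInstance)
      (⨆ (t : ℝ) (_ : (0:ℝ) ≤ t), MeasurableSpace.comap (X t) inferInstance) μ)
    (φ : (ℝ → E) → V → ℝ) (hφmeas : Measurable (Function.uncurry φ))
    (hφpos : ∀ p val, 0 ≤ φ p val)
    (hpast : ∀ (val : V) (t : ℝ), 0 ≤ t → ∀ p q : ℝ → E,
      (∀ s ∈ Set.Icc (0:ℝ) t, p s = q s) → (φ p val ≤ t ↔ φ q val ≤ t)) :
    IsWeakStoppingTime μ X (fun ω => φ (fun s => X s ω) (v ω))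
      (MeasurableSpace.comap v inferInstance) :=
  isWeakStoppingTime_of_depends_on_past_general μ X v hindep φ hφmeas hφpos hpast
end

section
/- Let S be a bounded self-adjoint operator on a real or complex Hilbert space H, let x ∈ H with x ≠ 0, and let n be a natural number. Then ‖Sx‖/‖x‖ ≤ (‖S^{2^n} x‖/‖x‖)^{1/2^n}, where S^{2^n} denotes the 2^n-fold composition of S with itself. -/
/-!
For self-adjoint `T`, Cauchy–Schwarz gives `‖T x‖² = ⟪x, T² x⟫ ≤ ‖x‖ ‖T² x‖`. Applied to
`T = S ^ 2 ^ k`, this says that the ratios `u k = ‖S^{2^k} x‖ / ‖x‖` satisfy `u k ^ 2 ≤ u (k + 1)`,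
hence `u 0 ^ 2 ^ n ≤ u n`; taking `2^n`-th roots gives the claim.
-/

theorem LinearMap.IsSymmetric.norm_apply_sq_le {𝕜 E : Type*} [RCLike 𝕜]
    [SeminormedAddCommGroup E] [InnerProductSpace 𝕜 E] {T : E →ₗ[𝕜] E} (hT : T.IsSymmetric)
    (x : E) : ‖T x‖ ^ 2 ≤ ‖T (T x)‖ * ‖x‖ :=
  calc ‖T x‖ ^ 2 = RCLike.re (inner 𝕜 (T x) (T x)) := (inner_self_eq_norm_sq _).symm
    _ = RCLike.re (inner 𝕜 x (T (T x))) := by rw [hT x (T x)]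
    _ ≤ ‖x‖ * ‖T (T x)‖ := (RCLike.re_le_norm _).trans (norm_inner_le_norm x _)
    _ = ‖T (T x)‖ * ‖x‖ := mul_comm _ _

theorem div_sq_le_div_of_sq_le_mul {a b c : ℝ} (h : a ^ 2 ≤ b * c) : (a / c) ^ 2 ≤ b / c := by
  rcases eq_or_ne c 0 with rfl | hc
  · simp
  · calc (a / c) ^ 2 = a ^ 2 / c ^ 2 := div_pow a c 2
      _ ≤ b * c / c ^ 2 := by gcongr
      _ = b / c := by field_simp

theorem pow_two_pow_le_of_sq_le_succ {M₀ : Type*} [MonoidWithZero M₀] [Preorder M₀]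
    [ZeroLEOneClass M₀] [PosMulMono M₀] [MulPosMono M₀] {u : ℕ → M₀} (h₀ : 0 ≤ u 0)
    (h : ∀ k, u k ^ 2 ≤ u (k + 1)) (n : ℕ) : u 0 ^ 2 ^ n ≤ u n := by
  induction n with
  | zero => simp
  | succ n ih =>
    calc u 0 ^ 2 ^ (n + 1) = (u 0 ^ 2 ^ n) ^ 2 := by rw [pow_succ, pow_mul]
      _ ≤ u n ^ 2 := pow_le_pow_left₀ (pow_nonneg h₀ _) ih 2
      _ ≤ u (n + 1) := h n

theorem Real.le_rpow_one_div_two_pow_of_sq_le_succ {u : ℕ → ℝ} (h₀ : 0 ≤ u 0)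
    (h : ∀ k, u k ^ 2 ≤ u (k + 1)) (n : ℕ) : u 0 ≤ u n ^ ((1 : ℝ) / 2 ^ n) := by
  have hroot : (u 0 ^ 2 ^ n) ^ ((1 : ℝ) / 2 ^ n) = u 0 := by
    simpa using Real.pow_rpow_inv_natCast h₀ (pow_ne_zero n two_ne_zero)
  calc u 0 = (u 0 ^ 2 ^ n) ^ ((1 : ℝ) / 2 ^ n) := hroot.symm
    _ ≤ u n ^ ((1 : ℝ) / 2 ^ n) :=
      Real.rpow_le_rpow (pow_nonneg h₀ _) (pow_two_pow_le_of_sq_le_succ h₀ h n) (by positivity)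

theorem norm_apply_div_le_pow_selfAdjoint_general
    {𝕜 H : Type*} [RCLike 𝕜] [NormedAddCommGroup H] [InnerProductSpace 𝕜 H]
    [CompleteSpace H] (S : H →L[𝕜] H) (hS : IsSelfAdjoint S)
    (x : H) (n : ℕ) :
    ‖S x‖ / ‖x‖ ≤ (‖(S ^ 2 ^ n) x‖ / ‖x‖) ^ ((1 : ℝ) / 2 ^ n) := by
  have hstep (k : ℕ) :
      (‖(S ^ 2 ^ k) x‖ / ‖x‖) ^ 2 ≤ ‖(S ^ 2 ^ (k + 1)) x‖ / ‖x‖ := by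
    have hsq : S ^ 2 ^ (k + 1) = S ^ 2 ^ k * S ^ 2 ^ k := by rw [pow_succ, pow_mul, sq]
    rw [hsq]
    exact div_sq_le_div_of_sq_le_mul ((hS.pow (2 ^ k)).isSymmetric.norm_apply_sq_le x)
  simpa using Real.le_rpow_one_div_two_pow_of_sq_le_succ (u := fun k ↦ ‖(S ^ 2 ^ k) x‖ / ‖x‖)
    (by positivity) hstep n

/-- For a bounded self-adjoint operator `S` on a (real or complex) Hilbert
space `H` and `x ≠ 0`, one has `‖Sx‖/‖x‖ ≤ (‖S^{2^n} x‖/‖x‖)^{1/2^n}` for every `n`. -/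
theorem norm_apply_div_le_pow_selfAdjoint
    {𝕜 H : Type*} [RCLike 𝕜] [NormedAddCommGroup H] [InnerProductSpace 𝕜 H]
    [CompleteSpace H] (S : H →L[𝕜] H) (hS : IsSelfAdjoint S)
    (x : H) (hx : x ≠ 0) (n : ℕ) :
    ‖S x‖ / ‖x‖ ≤ (‖(S ^ 2 ^ n) x‖ / ‖x‖) ^ ((1 : ℝ) / 2 ^ n) :=
  norm_apply_div_le_pow_selfAdjoint_general S hS x n
end
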